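/- arXiv:2012.06394 — 3 statements merged into one kernel-verified Lean document; each statement's English description precedes it below -/
import Mathlib

section
/- A core inequality β₀ + Σ_{j=1}^n β_j x_j + β′ y ≥ 0 is valid for conv(G) if and only if L_k(β₀,β) + β′·m(x^k) ≥ 0 for every k ∈ {0,…,n}. -/
open Finset

/-- The symmetric multilinear polynomial `m(x) = ∑_{i=2}^n c_i ∑_{|J|=i} ∏_{j∈J} x_j`. -/
noncomputable def mPoly (n : ℕ) (c : ℕ → ℝ) (x : Fin n → ℝ) : ℝ :=
  ∑ i ∈ Finset.Icc 2 n, c i *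
    ∑ J ∈ Finset.powersetCard i (Finset.univ : Finset (Fin n)), ∏ j ∈ J, x j

/-- The box `X = [ℓ,u]^n`. -/
def Xbox (n : ℕ) (ℓ u : ℝ) : Set (Fin n → ℝ) :=
  {x | ∀ j, x j ∈ Set.Icc ℓ u}

/-- The graph `G = {(x,y) : x ∈ X, y = m(x)}`. -/
def Gset (n : ℕ) (ℓ u : ℝ) (c : ℕ → ℝ) : Set ((Fin n → ℝ) × ℝ) :=
  {p | p.1 ∈ Xbox n ℓ u ∧ p.2 = mPoly n c p.1}

/-- The point `x^k` whose first `k` coordinates are `u` and remaining ones are `ℓ`. -/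
def xpt (n : ℕ) (ℓ u : ℝ) (k : ℕ) : Fin n → ℝ :=
  fun j => if (j : ℕ) < k then u else ℓ

/-- `m(x^k)`. -/
noncomputable def mval (n : ℕ) (ℓ u : ℝ) (c : ℕ → ℝ) (k : ℕ) : ℝ :=
  mPoly n c (xpt n ℓ u k)

/-- `L_k(β₀,β) = β₀ + u ∑_{j=1}^k β_j + ℓ ∑_{j=k+1}^n β_j`. -/
noncomputable def Lk (n : ℕ) (ℓ u : ℝ) (β₀ : ℝ) (β : Fin n → ℝ) (k : ℕ) : ℝ :=
  β₀ + u * ∑ j ∈ Finset.univ.filter (fun j : Fin n => (j : ℕ) < k), β j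
     + ℓ * ∑ j ∈ Finset.univ.filter (fun j : Fin n => k ≤ (j : ℕ)), β j

/-- The left-hand side `β₀ + ∑_j β_j x_j + β′ y` of an inequality, at the point `p = (x,y)`. -/
noncomputable def ineqLhs (n : ℕ) (β₀ : ℝ) (β : Fin n → ℝ) (β' : ℝ)
    (p : (Fin n → ℝ) × ℝ) : ℝ :=
  β₀ + ∑ j, β j * p.1 j + β' * p.2

/-- A core inequality: `β′ ∈ {1,-1}` and nondecreasing coefficients `β₁ ≤ … ≤ βₙ`. -/
def IsCore (n : ℕ) (β : Fin n → ℝ) (β' : ℝ) : Prop :=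
  (β' = 1 ∨ β' = -1) ∧ Monotone β

/-- Validity of the inequality `β₀ + ∑_j β_j x_j + β′ y ≥ 0` on `conv(G)`. -/
def IsValid (n : ℕ) (ℓ u : ℝ) (c : ℕ → ℝ) (β₀ : ℝ) (β : Fin n → ℝ) (β' : ℝ) : Prop :=
  ∀ p ∈ convexHull ℝ (Gset n ℓ u c), 0 ≤ ineqLhs n β₀ β β' p

/-- The point `p` satisfies the inequality exactly (with equality). -/
def ExactAt (n : ℕ) (β₀ : ℝ) (β : Fin n → ℝ) (β' : ℝ) (p : (Fin n → ℝ) × ℝ) : Prop :=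
  ineqLhs n β₀ β β' p = 0

/-- Facet-defining: there are `n+1` affinely independent points of `conv(G)`
satisfying the inequality exactly. -/
def IsFacet (n : ℕ) (ℓ u : ℝ) (c : ℕ → ℝ) (β₀ : ℝ) (β : Fin n → ℝ) (β' : ℝ) : Prop :=
  ∃ pts : Fin (n + 1) → (Fin n → ℝ) × ℝ,
    AffineIndependent ℝ pts ∧
    ∀ i, pts i ∈ convexHull ℝ (Gset n ℓ u c) ∧ ExactAt n β₀ β β' (pts i)

/-- The point `(x^k, m(x^k))` of `G`. -/
noncomputable def vtx (n : ℕ) (ℓ u : ℝ) (c : ℕ → ℝ) (k : ℕ) : (Fin n → ℝ) × ℝ :=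
  (xpt n ℓ u k, mval n ℓ u c k)

/-!
On the graph the left-hand side is `F x = β₀ + β ⬝ x + β′ m(x)`. As `m` is multilinear, `F` is
affine in each coordinate, so its minimum over the box is attained at a vertex, and every vertex is
`x^k ∘ σ` for some `k` and some permutation `σ`. The polynomial `m` is symmetric, and since `β` is
nondecreasing while `x^k` is nonincreasing, the rearrangement inequality gives
`β ⬝ x^k ≤ β ⬝ (x^k ∘ σ)`. Hence `F ≥ 0` on `G`, and so on `conv(G)`, as soon as `F(x^k) ≥ 0`
for every `k`.
-/

open Function

theorem exists_vertex_le_of_concaveOn_update {ι : Type*} [Fintype ι] [DecidableEq ι]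
    {f : (ι → ℝ) → ℝ} {a b : ℝ}
    (hf : ∀ x i, ConcaveOn ℝ (Set.Icc a b) fun s => f (update x i s))
    {x : ι → ℝ} (hx : ∀ i, x i ∈ Set.Icc a b) :
    ∃ y : ι → ℝ, (∀ i, y i = a ∨ y i = b) ∧ f y ≤ f x := by
  suffices key : ∀ s : Finset ι, ∀ x : ι → ℝ, (∀ i, x i ∈ Set.Icc a b) →
      (∀ i ∉ s, x i = a ∨ x i = b) → ∃ y : ι → ℝ, (∀ i, y i = a ∨ y i = b) ∧ f y ≤ f x from
    key univ x hx fun i hi => absurd (mem_univ i) hi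
  intro s
  induction s using Finset.induction_on with
  | empty => exact fun x _ hx => ⟨x, fun i => hx i (notMem_empty i), le_rfl⟩
  | insert i s _ ih =>
    intro x hx hxs
    have hab : a ≤ b := (hx i).1.trans (hx i).2
    have hmin := (hf x i).min_le_of_mem_Icc (Set.left_mem_Icc.2 hab) (Set.right_mem_Icc.2 hab)
      (hx i)
    simp only [update_eq_self] at hmin
    obtain ⟨e, he, hfe⟩ : ∃ e, (e = a ∨ e = b) ∧ f (update x i e) ≤ f x := by
      rcases min_le_iff.1 hmin with h | h
      exacts [⟨a, .inl rfl, h⟩, ⟨b, .inr rfl, h⟩]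
    have he' : e ∈ Set.Icc a b := by rcases he with rfl | rfl <;> simp [hab]
    obtain ⟨y, hy, hyx⟩ := ih (update x i e)
      (fun j => by
        rcases eq_or_ne j i with rfl | hji
        · simpa using he'
        · simpa [hji] using hx j)
      (fun j hj => by
        rcases eq_or_ne j i with rfl | hji
        · simpa using he
        · simpa [hji] using hxs j (by simp [hji, hj]))
    exact ⟨y, hy, hyx.trans hfe⟩

theorem concaveOn_add_mul {A B : ℝ} {s : Set ℝ} (hs : Convex ℝ s) :
    ConcaveOn ℝ s fun t => A + B * t := by
  refine ⟨hs, fun x _ y _ a b _ _ hab => le_of_eq ?_⟩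
  simp only [smul_eq_mul]
  linear_combination A * hab

theorem mPoly_update_eq_add_mul {n : ℕ} (c : ℕ → ℝ) (x : Fin n → ℝ) (t : Fin n) :
    ∃ A B : ℝ, ∀ s, mPoly n c (update x t s) = A + B * s := by
  refine ⟨∑ i ∈ Icc 2 n, c i * ∑ J ∈ powersetCard i univ, if t ∈ J then 0 else ∏ j ∈ J, x j,
    ∑ i ∈ Icc 2 n, c i * ∑ J ∈ powersetCard i univ, if t ∈ J then ∏ j ∈ J.erase t, x j else 0,
    fun s => ?_⟩
  simp only [mPoly, Finset.mul_sum, Finset.sum_mul, ← Finset.sum_add_distrib]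
  refine sum_congr rfl fun i _ => sum_congr rfl fun J _ => ?_
  split_ifs with h
  · rw [prod_update_of_mem h, sdiff_singleton_eq_erase]; ring
  · rw [prod_update_of_notMem h]; ring

theorem mPoly_comp_perm {n : ℕ} (c : ℕ → ℝ) (x : Fin n → ℝ) (σ : Equiv.Perm (Fin n)) :
    mPoly n c (x ∘ σ) = mPoly n c x := by
  refine sum_congr rfl fun i _ => congrArg _ ?_
  conv_rhs => rw [← map_univ_equiv σ, powersetCard_map, sum_map]
  simp [prod_map]

theorem ineqLhs_vtx {n : ℕ} (ℓ u : ℝ) (c : ℕ → ℝ) (β₀ : ℝ) (β : Fin n → ℝ) (β' : ℝ) (k : ℕ) :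
    ineqLhs n β₀ β β' (vtx n ℓ u c k) = Lk n ℓ u β₀ β k + β' * mval n ℓ u c k := by
  simp only [ineqLhs, vtx, Lk, xpt, mul_ite, sum_ite, ← sum_mul, not_lt]
  ring

theorem convex_setOf_nonneg_ineqLhs {n : ℕ} (β₀ : ℝ) (β : Fin n → ℝ) (β' : ℝ) :
    Convex ℝ {p | 0 ≤ ineqLhs n β₀ β β' p} := by
  have hlin : IsLinearMap ℝ fun p : (Fin n → ℝ) × ℝ => ∑ j, β j * p.1 j + β' * p.2 :=
    ⟨fun p q => by
      simp only [Prod.fst_add, Prod.snd_add, Pi.add_apply, mul_add, sum_add_distrib]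
      ring,
     fun r p => by
      simp only [Prod.smul_fst, Prod.smul_snd, Pi.smul_apply, smul_eq_mul, mul_add, mul_sum,
        mul_left_comm]⟩
  simpa only [ineqLhs, add_assoc, ← neg_le_iff_add_nonneg'] using convex_halfSpace_ge hlin (-β₀)

theorem ineqLhs_graph_update_eq_add_mul {n : ℕ} (c : ℕ → ℝ) (β₀ : ℝ) (β : Fin n → ℝ) (β' : ℝ)
    (x : Fin n → ℝ) (t : Fin n) :
    ∃ A B : ℝ, ∀ s, ineqLhs n β₀ β β' (update x t s, mPoly n c (update x t s)) = A + B * s := by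
  obtain ⟨A, B, hAB⟩ := mPoly_update_eq_add_mul c x t
  refine ⟨β₀ + ∑ j ∈ univ \ {t}, β j * x j + β' * A, β t + β' * B, fun s => ?_⟩
  simp only [ineqLhs, hAB, apply_update (fun j r => β j * r), sum_update_of_mem (mem_univ t)]
  ring

theorem exists_perm_eq_xpt_comp {n : ℕ} {ℓ u : ℝ} {y : Fin n → ℝ} (hy : ∀ j, y j = ℓ ∨ y j = u) :
    ∃ k ≤ n, ∃ σ : Equiv.Perm (Fin n), y = xpt n ℓ u k ∘ σ := by
  classical
  set S := univ.filter fun j => y j = u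
  have hk : #S ≤ n := by simpa using card_le_univ S
  obtain ⟨σ, hσ⟩ := Equiv.Perm.exists_map_finset_eq S (univ.filter fun j : Fin n => (j : ℕ) < #S)
    (by rw [Fin.card_filter_val_lt, min_eq_right hk])
  refine ⟨#S, hk, σ, funext fun j => ?_⟩
  have hjS : y j = u ↔ (σ j : ℕ) < #S := by
    calc y j = u ↔ j ∈ S := by simp [S]
      _ ↔ σ j ∈ S.map σ.toEmbedding := (mem_map' _).symm
      _ ↔ _ := by simp [hσ]
  simp only [comp_apply, xpt]
  split_ifs with h
  · exact hjS.2 h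
  · exact (hy j).resolve_right (mt hjS.1 h)

theorem antivary_xpt {n : ℕ} {ℓ u : ℝ} (hlu : ℓ ≤ u) {β : Fin n → ℝ} (hβ : Monotone β) (k : ℕ) :
    Antivary β (xpt n ℓ u k) := by
  intro i j h
  unfold xpt at h
  split_ifs at h with hi hj hj
  · exact absurd h (lt_irrefl u)
  · exact absurd h (not_lt.2 hlu)
  · exact hβ (Fin.le_def.2 (by omega))
  · exact absurd h (lt_irrefl ℓ)

theorem ineqLhs_vtx_le_comp_perm {n : ℕ} {ℓ u : ℝ} (hlu : ℓ ≤ u) (c : ℕ → ℝ) (β₀ : ℝ)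
    {β : Fin n → ℝ} (hβ : Monotone β) (β' : ℝ) (k : ℕ) (σ : Equiv.Perm (Fin n)) :
    ineqLhs n β₀ β β' (vtx n ℓ u c k) ≤
      ineqLhs n β₀ β β' (xpt n ℓ u k ∘ σ, mPoly n c (xpt n ℓ u k ∘ σ)) := by
  simp only [ineqLhs, vtx, mval, mPoly_comp_perm, comp_apply]
  gcongr β₀ + ?_ + _
  exact (antivary_xpt hlu hβ k).sum_mul_le_sum_mul_comp_perm

theorem vtx_mem_Gset {n : ℕ} {ℓ u : ℝ} (hlu : ℓ ≤ u) (c : ℕ → ℝ) (k : ℕ) :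
    vtx n ℓ u c k ∈ Gset n ℓ u c :=
  ⟨fun j => by simp only [vtx, xpt]; split_ifs <;> simp [hlu], rfl⟩

theorem stmt0_general (n : ℕ) (ℓ u : ℝ) (hlu : ℓ < u) (c : ℕ → ℝ)
    (β₀ : ℝ) (β : Fin n → ℝ) (β' : ℝ) (hcore : IsCore n β β') :
    IsValid n ℓ u c β₀ β β' ↔
      ∀ k ≤ n, 0 ≤ Lk n ℓ u β₀ β k + β' * mval n ℓ u c k := by
  refine ⟨fun hvalid k _ => ?_, fun hvtx p hp => ?_⟩
  · rw [← ineqLhs_vtx]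
    exact hvalid _ (subset_convexHull ℝ _ (vtx_mem_Gset hlu.le c k))
  refine convexHull_min ?_ (convex_setOf_nonneg_ineqLhs β₀ β β') hp
  rintro ⟨x, y⟩ ⟨hx, hy : y = mPoly n c x⟩
  subst hy
  have hslice x t : ConcaveOn ℝ (Set.Icc ℓ u) fun s =>
      ineqLhs n β₀ β β' (update x t s, mPoly n c (update x t s)) := by
    obtain ⟨A, B, hAB⟩ := ineqLhs_graph_update_eq_add_mul c β₀ β β' x t
    simpa only [hAB] using concaveOn_add_mul (convex_Icc ℓ u)
  obtain ⟨z, hz, hzx⟩ := exists_vertex_le_of_concaveOn_update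
    (f := fun x => ineqLhs n β₀ β β' (x, mPoly n c x)) hslice hx
  obtain ⟨k, hk, σ, rfl⟩ := exists_perm_eq_xpt_comp hz
  calc 0 ≤ Lk n ℓ u β₀ β k + β' * mval n ℓ u c k := hvtx k hk
    _ = ineqLhs n β₀ β β' (vtx n ℓ u c k) := (ineqLhs_vtx ℓ u c β₀ β β' k).symm
    _ ≤ _ := ineqLhs_vtx_le_comp_perm hlu.le c β₀ hcore.2 β' k σ
    _ ≤ _ := hzx

/-- A core inequality is valid for `conv(G)` iff
`L_k(β₀,β) + β′ m(x^k) ≥ 0` for every `k ∈ {0,…,n}`. -/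
theorem stmt0 (n : ℕ) (hn : 2 ≤ n) (ℓ u : ℝ) (hlu : ℓ < u) (c : ℕ → ℝ)
    (β₀ : ℝ) (β : Fin n → ℝ) (β' : ℝ) (hcore : IsCore n β β') :
    IsValid n ℓ u c β₀ β β' ↔
      ∀ k ≤ n, 0 ≤ Lk n ℓ u β₀ β k + β' * mval n ℓ u c k :=
  stmt0_general n ℓ u hlu c β₀ β β' hcore
end

section
/- conv(G) equals the projection onto the (x,y)-coordinates of the polyhedron of points (x, w⁰,…,wⁿ, y, v, λ) with each w^k ∈ ℝ^n, v ∈ ℝ^{n+1}, λ ∈ ℝ^{n+1} satisfying: x_j = Σ_{k=0}^n w^k_j for all j ∈ N; y = Σ_{k=0}^n v_k; Σ_{k=0}^n λ_k = 1; Σ_{j=1}^n w^k_j = (k u + (n−k) ℓ) λ_k and v_k = m(x^k) λ_k for each k = 0,…,n; ℓ λ_k ≤ w^k_j ≤ u λ_k for all j, k; and λ_k ≥ 0 for all k. -/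
/-!
Let `χ_S ∈ [ℓ,u]^n` be the box vertex equal to `u` on `S` and to `ℓ` off `S`. Writing
`x_j = t_j u + (1 - t_j) ℓ`, the product weights `∏_{j ∈ S} t_j ∏_{j ∉ S} (1 - t_j)` express `x`
as a convex combination of the `χ_S` that reproduces every monomial, hence the multilinear `m`; so
`conv(G)` is the convex hull of the points `(χ_S, m(χ_S))`. By symmetry `m(χ_S) = m(x^{|S|})`.
The slice `{z ∈ [ℓ,u]^n : ∑ z = k u + (n - k) ℓ}` is the convex hull of the `χ_S` with `|S| = k`:
by Krein–Milman it suffices that its extreme points have no coordinate in `(ℓ,u)`, and indeed two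
such coordinates allow moving mass between them, while a single one would differ from `ℓ` by an
integer multiple of `u - ℓ`. The displayed polyhedron is the disjunctive description of the convex
hull of the union of these slices lifted to height `m(x^k)`: `λ_k` is the weight of slice `k` and
`(w^k, v_k)` its scaled contribution.
-/

open Finset

section BoxVertex

variable {ι : Type*} [DecidableEq ι] {ℓ u : ℝ}

def boxVertex (ℓ u : ℝ) (S : Finset ι) : ι → ℝ := fun j => if j ∈ S then u else ℓ

lemma boxVertex_mem_Icc (hlu : ℓ ≤ u) (S : Finset ι) (j : ι) :
    boxVertex ℓ u S j ∈ Set.Icc ℓ u := by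
  unfold boxVertex
  split_ifs <;> simp [hlu]

variable [Fintype ι]

lemma map_boxVertex (ℓ u : ℝ) (S : Finset ι) :
    univ.val.map (boxVertex ℓ u S) =
      Multiset.replicate #S u + Multiset.replicate (Fintype.card ι - #S) ℓ := by
  rw [← Multiset.filter_add_not (· ∈ S) univ.val, Multiset.map_add]
  congr 1 <;> rw [Multiset.eq_replicate]
  · refine ⟨by simp [← filter_val], fun b hb => ?_⟩
    obtain ⟨j, hj, rfl⟩ := Multiset.mem_map.mp hb
    exact if_pos (Multiset.of_mem_filter hj)
  · refine ⟨by simp [← filter_val, filter_not], fun b hb => ?_⟩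
    obtain ⟨j, hj, rfl⟩ := Multiset.mem_map.mp hb
    exact if_neg (Multiset.of_mem_filter (p := (· ∉ S)) hj)

lemma sum_boxVertex (ℓ u : ℝ) (S : Finset ι) :
    ∑ j, boxVertex ℓ u S j = #S * u + ((Fintype.card ι - #S : ℕ) : ℝ) * ℓ := by
  rw [sum_eq_multiset_sum, map_boxVertex]
  simp

lemma card_eq_of_sum_boxVertex (hlu : ℓ < u) {S : Finset ι} {k : ℕ} (hk : k ≤ Fintype.card ι)
    (h : ∑ j, boxVertex ℓ u S j = k * u + ((Fintype.card ι - k : ℕ) : ℝ) * ℓ) : #S = k := by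
  rw [sum_boxVertex, Nat.cast_sub hk, Nat.cast_sub (card_le_univ S)] at h
  have : ((#S : ℝ) - k) * (u - ℓ) = 0 := by linarith
  exact_mod_cast sub_eq_zero.mp ((mul_eq_zero.mp this).resolve_right (sub_ne_zero.mpr hlu.ne'))

lemma exists_boxVertex_weights (hlu : ℓ < u) {x : ι → ℝ} (hx : ∀ j, x j ∈ Set.Icc ℓ u) :
    ∃ μ : Finset ι → ℝ, (∀ S, 0 ≤ μ S) ∧
      ∀ J : Finset ι, ∑ S, μ S * ∏ j ∈ J, boxVertex ℓ u S j = ∏ j ∈ J, x j := by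
  have hul : 0 < u - ℓ := sub_pos.mpr hlu
  set t : ι → ℝ := fun j => (x j - ℓ) / (u - ℓ)
  have ht (j : ι) : 0 ≤ t j ∧ t j ≤ 1 :=
    ⟨div_nonneg (by linarith [(hx j).1]) hul.le, (div_le_one hul).mpr (by linarith [(hx j).2])⟩
  refine ⟨fun S => (∏ j ∈ S, t j) * ∏ j ∈ univ \ S, (1 - t j), fun S =>
    mul_nonneg (prod_nonneg fun j _ => (ht j).1) (prod_nonneg fun j _ => sub_nonneg.mpr (ht j).2),
    fun J => ?_⟩
  set a : ι → ℝ := fun j => if j ∈ J then u else 1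
  set b : ι → ℝ := fun j => if j ∈ J then ℓ else 1
  have hx_eq : ∏ j ∈ J, x j = ∏ j, (t j * a j + (1 - t j) * b j) := by
    rw [← univ_inter J, ← prod_ite_mem]
    refine prod_congr rfl fun j _ => ?_
    by_cases hj : j ∈ J
    · simp only [hj, if_true, a, b, t]
      field_simp
      ring
    · simp only [hj, if_false, a, b]
      ring
  have hvertex (S : Finset ι) :
      (∏ j ∈ S, a j) * ∏ j ∈ univ \ S, b j = ∏ j ∈ J, boxVertex ℓ u S j := by
    have hpw := prod_piecewise univ S a b
    rw [univ_inter] at hpw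
    rw [← hpw, ← univ_inter J, ← prod_ite_mem]
    refine prod_congr rfl fun j _ => ?_
    by_cases hj : j ∈ J <;> by_cases hS : j ∈ S <;> simp [a, b, boxVertex, hj, hS]
  rw [hx_eq, prod_add, powerset_univ]
  refine sum_congr rfl fun S _ => ?_
  rw [← hvertex, prod_mul_distrib, prod_mul_distrib]
  ring

end BoxVertex

section BoxSlice

variable {ι : Type*} [Fintype ι] {ℓ u : ℝ}

def boxSlice (ℓ u s : ℝ) : Set (ι → ℝ) :=
  Set.univ.pi (fun _ => Set.Icc ℓ u) ∩ {z | ∑ j, z j = s}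

lemma convex_boxSlice (ℓ u s : ℝ) : Convex ℝ (boxSlice (ι := ι) ℓ u s) := by
  refine (convex_pi fun _ _ => convex_Icc ℓ u).inter fun z hz w hw a b _ _ hab => ?_
  simp_all [sum_add_distrib, ← mul_sum, ← add_mul]

lemma isCompact_boxSlice (ℓ u s : ℝ) : IsCompact (boxSlice (ι := ι) ℓ u s) :=
  (isCompact_univ_pi fun _ => isCompact_Icc).inter_right <|
    isClosed_eq (continuous_finsetSum _ fun j _ => continuous_apply j) continuous_const

variable [DecidableEq ι]

lemma eq_of_mem_extremePoints_boxSlice {s : ℝ} {z : ι → ℝ}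
    (hz : z ∈ (boxSlice ℓ u s).extremePoints ℝ) {i j : ι} (hi : z i ∈ Set.Ioo ℓ u)
    (hj : z j ∈ Set.Ioo ℓ u) : i = j := by
  by_contra hij
  obtain ⟨⟨hz_box, hz_sum⟩, hz_ext⟩ := mem_extremePoints.mp hz
  obtain ⟨δ, hδ, hδi, hδj⟩ : ∃ δ > 0, (δ ≤ z i - ℓ ∧ δ ≤ u - z i) ∧ δ ≤ z j - ℓ ∧ δ ≤ u - z j :=
    ⟨min (min (z i - ℓ) (u - z i)) (min (z j - ℓ) (u - z j)),
      by simp [hi.1, hi.2, hj.1, hj.2], by simp, by simp⟩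
  set e : ι → ℝ := Pi.single i 1 - Pi.single j 1
  have hmove (ε : ℝ) (hε : |ε| ≤ δ) : z + ε • e ∈ boxSlice ℓ u s := by
    obtain ⟨hε₁, hε₂⟩ := abs_le.mp hε
    refine ⟨fun a _ => ?_, ?_⟩
    · obtain rfl | hai := eq_or_ne a i
      · simp only [Pi.add_apply, Pi.smul_apply, e, Pi.sub_apply, Pi.single_eq_same,
          Pi.single_eq_of_ne hij, smul_eq_mul]
        constructor <;> linarith
      obtain rfl | haj := eq_or_ne a j
      · simp only [Pi.add_apply, Pi.smul_apply, e, Pi.sub_apply, Pi.single_eq_same,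
          Pi.single_eq_of_ne hai, smul_eq_mul]
        constructor <;> linarith
      simpa [e, hai, haj] using hz_box a trivial
    · simpa [e, sum_add_distrib, ← mul_sum, sum_sub_distrib] using hz_sum
  have he : δ • e = 0 := by
    refine (hz_ext _ ?_ _ (hmove δ (abs_of_pos hδ).le) (mem_openSegment_sub_add z (δ • e))).2
      |> add_eq_left.mp
    simpa [sub_eq_add_neg] using hmove (-δ) (by rw [abs_neg, abs_of_pos hδ])
  simpa [e, hij, hδ.ne'] using congrFun he i

lemma exists_boxVertex_eq_of_mem_extremePoints (hlu : ℓ < u) {k : ℕ} (hk : k ≤ Fintype.card ι)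
    {z : ι → ℝ}
    (hz : z ∈ (boxSlice ℓ u (k * u + ((Fintype.card ι - k : ℕ) : ℝ) * ℓ)).extremePoints ℝ) :
    ∃ S : Finset ι, #S = k ∧ boxVertex ℓ u S = z := by
  have hz_mem := (mem_extremePoints.mp hz).1
  have hz_Icc (j : ι) : z j ∈ Set.Icc ℓ u := hz_mem.1 j (Set.mem_univ j)
  set S : Finset ι := {j | z j = u}
  have hz_vertex (j : ι) (hj : z j ∉ Set.Ioo ℓ u) : boxVertex ℓ u S j = z j := by
    by_cases hju : z j = u
    · simp [boxVertex, S, hju]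
    · have : z j = ℓ := by
        by_contra hjl
        exact hj ⟨lt_of_le_of_ne (hz_Icc j).1 (Ne.symm hjl), lt_of_le_of_ne (hz_Icc j).2 hju⟩
      rw [boxVertex, if_neg (by simpa [S] using hju), this]
  suffices hfrac : ∀ i, z i ∉ Set.Ioo ℓ u by
    have hz_eq : boxVertex ℓ u S = z := funext fun j => hz_vertex j (hfrac j)
    exact ⟨S, card_eq_of_sum_boxVertex hlu hk (hz_eq ▸ hz_mem.2), hz_eq⟩
  intro i hi
  -- all other coordinates are `ℓ` or `u`, so `z i - ℓ` is an integer multiple of `u - ℓ`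
  have hdiff : ∑ j, z j - ∑ j, boxVertex ℓ u S j = z i - ℓ := by
    rw [← sum_sub_distrib, sum_eq_single i]
    · simp [boxVertex, S, hi.2.ne]
    · intro j _ hji
      rw [hz_vertex j fun hj => hji (eq_of_mem_extremePoints_boxSlice hz hj hi), sub_self]
    · simp
  rw [hz_mem.2, sum_boxVertex, Nat.cast_sub hk, Nat.cast_sub (card_le_univ S)] at hdiff
  obtain ⟨hi_l, hi_u⟩ := hi
  rcases le_or_gt k #S with hkS | hSk
  · have : (k : ℝ) ≤ #S := by exact_mod_cast hkS
    nlinarith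
  · have : (#S : ℝ) + 1 ≤ k := by exact_mod_cast hSk
    nlinarith

lemma boxSlice_subset_convexHull (hlu : ℓ < u) {k : ℕ} (hk : k ≤ Fintype.card ι) :
    boxSlice ℓ u (k * u + ((Fintype.card ι - k : ℕ) : ℝ) * ℓ) ⊆
      convexHull ℝ (boxVertex ℓ u '' {S : Finset ι | #S = k}) := by
  rw [← closure_convexHull_extremePoints (isCompact_boxSlice ℓ u _) (convex_boxSlice ℓ u _)]
  refine ((Set.toFinite _).image _).isClosed_convexHull ℝ |>.closure_subset_iff.mpr
    (convexHull_mono fun z hz => ?_)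
  obtain ⟨S, hS, rfl⟩ := exists_boxVertex_eq_of_mem_extremePoints hlu hk hz
  exact ⟨S, hS, rfl⟩

end BoxSlice

section Symmetric

variable {n : ℕ} {ℓ u : ℝ} (c : ℕ → ℝ)

lemma mPoly_eq_of_map_univ_eq {x y : Fin n → ℝ} (h : univ.val.map x = univ.val.map y) :
    mPoly n c x = mPoly n c y := by
  simp only [mPoly, ← esymm_map_val, h]

lemma xpt_eq_boxVertex (n : ℕ) (ℓ u : ℝ) (k : ℕ) :
    xpt n ℓ u k = boxVertex ℓ u {j : Fin n | (j : ℕ) < k} := by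
  ext j
  simp [xpt, boxVertex]

lemma mPoly_boxVertex (S : Finset (Fin n)) : mPoly n c (boxVertex ℓ u S) = mval n ℓ u c #S := by
  rw [mval, xpt_eq_boxVertex]
  refine mPoly_eq_of_map_univ_eq c ?_
  rw [map_boxVertex, map_boxVertex, Fin.card_filter_val_lt,
    min_eq_right (card_le_univ S |>.trans_eq (Fintype.card_fin n))]

lemma mPoly_eq_sum_of_prod_eq {κ : Type*} [Fintype κ] {μ : κ → ℝ} {v : κ → Fin n → ℝ}
    {x : Fin n → ℝ} (h : ∀ J, ∑ S, μ S * ∏ j ∈ J, v S j = ∏ j ∈ J, x j) :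
    mPoly n c x = ∑ S, μ S * mPoly n c (v S) := by
  simp only [mPoly]
  simp_rw [← h, mul_sum]
  conv_rhs => rw [sum_comm]
  refine sum_congr rfl fun i _ => ?_
  rw [sum_comm]
  refine sum_congr rfl fun J _ => sum_congr rfl fun S _ => ?_
  ring

end Symmetric

section Hull

variable (n : ℕ) (ℓ u : ℝ) (c : ℕ → ℝ)

def liftedVertices : Set ((Fin n → ℝ) × ℝ) :=
  Set.range fun S : Finset (Fin n) => (boxVertex ℓ u S, mPoly n c (boxVertex ℓ u S))

def disjunctiveHull : Set ((Fin n → ℝ) × ℝ) :=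
  {p : (Fin n → ℝ) × ℝ |
    ∃ (w : Fin (n + 1) → Fin n → ℝ) (v lam : Fin (n + 1) → ℝ),
      (∀ j, p.1 j = ∑ k, w k j) ∧
      (p.2 = ∑ k, v k) ∧
      (∑ k, lam k = 1) ∧
      (∀ k : Fin (n + 1),
        ∑ j, w k j = (((k : ℕ) : ℝ) * u + ((n - (k : ℕ) : ℕ) : ℝ) * ℓ) * lam k) ∧
      (∀ k : Fin (n + 1), v k = mval n ℓ u c (k : ℕ) * lam k) ∧
      (∀ (k : Fin (n + 1)) (j : Fin n), ℓ * lam k ≤ w k j ∧ w k j ≤ u * lam k) ∧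
      (∀ k, 0 ≤ lam k)}

lemma convex_disjunctiveHull : Convex ℝ (disjunctiveHull n ℓ u c) := by
  rintro p ⟨w, v, lam, hp₁, hp₂, hp₃, hp₄, hp₅, hp₆, hp₇⟩
    q ⟨w', v', lam', hq₁, hq₂, hq₃, hq₄, hq₅, hq₆, hq₇⟩ a b ha hb hab
  refine ⟨a • w + b • w', a • v + b • v', a • lam + b • lam', fun j => ?_, ?_, ?_, fun k => ?_,
    fun k => ?_, fun k j => ?_, fun k => ?_⟩
  · simp [hp₁ j, hq₁ j, sum_add_distrib, mul_sum]
  · simp [hp₂, hq₂, sum_add_distrib, mul_sum]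
  · simp [sum_add_distrib, ← mul_sum, hp₃, hq₃, hab]
  · simp only [Pi.add_apply, Pi.smul_apply, smul_eq_mul, sum_add_distrib, ← mul_sum, hp₄ k, hq₄ k]
    ring
  · simp only [Pi.add_apply, Pi.smul_apply, smul_eq_mul, hp₅ k, hq₅ k]
    ring
  · simp only [Pi.add_apply, Pi.smul_apply, smul_eq_mul]
    constructor <;> nlinarith [hp₆ k j, hq₆ k j]
  · exact add_nonneg (mul_nonneg ha (hp₇ k)) (mul_nonneg hb (hq₇ k))

variable {n ℓ u}

lemma liftedVertices_subset_Gset (hlu : ℓ ≤ u) : liftedVertices n ℓ u c ⊆ Gset n ℓ u c := by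
  rintro _ ⟨S, rfl⟩
  exact ⟨boxVertex_mem_Icc hlu S, rfl⟩

lemma Gset_subset_convexHull_liftedVertices (hlu : ℓ < u) :
    Gset n ℓ u c ⊆ convexHull ℝ (liftedVertices n ℓ u c) := by
  rintro ⟨x, y⟩ ⟨hx, hy : y = mPoly n c x⟩
  subst hy
  obtain ⟨μ, hμ_nonneg, hμ⟩ := exists_boxVertex_weights hlu hx
  have hμ_sum : ∑ S, μ S = 1 := by simpa using hμ ∅
  have hcomb :
      ∑ S, μ S • (boxVertex ℓ u S, mPoly n c (boxVertex ℓ u S)) = (x, mPoly n c x) := by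
    refine Prod.ext (funext fun j => ?_) ?_
    · simpa [Prod.fst_sum] using hμ {j}
    · simp [Prod.snd_sum, mPoly_eq_sum_of_prod_eq c hμ]
  rw [← hcomb]
  exact (convex_convexHull ℝ _).sum_mem (fun S _ => hμ_nonneg S) hμ_sum
    fun S _ => subset_convexHull ℝ _ ⟨S, rfl⟩

lemma mk_mem_disjunctiveHull {k : Fin (n + 1)} {z : Fin n → ℝ}
    (hz : z ∈ boxSlice ℓ u ((k : ℕ) * u + ((n - k : ℕ) : ℝ) * ℓ)) :
    (z, mval n ℓ u c k) ∈ disjunctiveHull n ℓ u c := by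
  have hz_box (j : Fin n) : ℓ ≤ z j ∧ z j ≤ u := hz.1 j (Set.mem_univ j)
  have hz_sum : ∑ j, z j = (k : ℕ) * u + ((n - k : ℕ) : ℝ) * ℓ := hz.2
  refine ⟨Pi.single k z, Pi.single k (mval n ℓ u c k), Pi.single k 1, fun j => ?_, by simp,
    by simp, fun k' => ?_, fun k' => ?_, fun k' j => ?_, fun k' => ?_⟩
  · rw [← Finset.sum_apply, sum_pi_single']
    simp
  all_goals
    obtain rfl | hk := eq_or_ne k' k
    · simp [hz_sum, hz_box]
    · simp [hk]

lemma liftedVertices_subset_disjunctiveHull (hlu : ℓ ≤ u) :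
    liftedVertices n ℓ u c ⊆ disjunctiveHull n ℓ u c := by
  rintro _ ⟨S, rfl⟩
  have hS : #S < n + 1 := Nat.lt_succ_of_le (card_le_univ S |>.trans_eq (Fintype.card_fin n))
  simp only [mPoly_boxVertex]
  refine mk_mem_disjunctiveHull (k := ⟨#S, hS⟩) c ⟨fun j _ => boxVertex_mem_Icc hlu S j, ?_⟩
  simpa using sum_boxVertex ℓ u S

lemma mk_mem_convexHull_liftedVertices (hlu : ℓ < u) {k : ℕ} (hk : k ≤ n) {z : Fin n → ℝ}
    (hz : z ∈ boxSlice ℓ u (k * u + ((n - k : ℕ) : ℝ) * ℓ)) :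
    (z, mval n ℓ u c k) ∈ convexHull ℝ (liftedVertices n ℓ u c) := by
  have hz_hull : z ∈ convexHull ℝ (boxVertex ℓ u '' {S : Finset (Fin n) | #S = k}) :=
    boxSlice_subset_convexHull hlu (hk.trans_eq (Fintype.card_fin n).symm)
      (by rwa [Fintype.card_fin])
  have hzm : (z, mval n ℓ u c k) ∈
      convexHull ℝ ((boxVertex ℓ u '' {S : Finset (Fin n) | #S = k}) ×ˢ {mval n ℓ u c k}) := by
    rw [convexHull_prod, convexHull_singleton]
    exact ⟨hz_hull, rfl⟩
  refine convexHull_mono ?_ hzm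
  rintro ⟨_, y⟩ ⟨⟨S, hS : #S = k, rfl⟩, hy : y = mval n ℓ u c k⟩
  exact ⟨S, by simp [mPoly_boxVertex, hS, hy]⟩

lemma disjunctiveHull_subset_convexHull_liftedVertices (hlu : ℓ < u) :
    disjunctiveHull n ℓ u c ⊆ convexHull ℝ (liftedVertices n ℓ u c) := by
  rintro ⟨x, y⟩ ⟨w, v, lam, hx, hy, hlam_sum, hw_sum, hv, hw_bound, hlam_nonneg⟩
  have hpiece (k : Fin (n + 1)) :
      ∃ p ∈ convexHull ℝ (liftedVertices n ℓ u c), lam k • p = (w k, v k) := by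
    rcases (hlam_nonneg k).eq_or_lt with hk0 | hkpos
    · have hw0 : w k = 0 := funext fun j => le_antisymm
        (by simpa [← hk0] using (hw_bound k j).2) (by simpa [← hk0] using (hw_bound k j).1)
      exact ⟨_, subset_convexHull ℝ _ ⟨∅, rfl⟩, by simp [← hk0, hw0, hv k, Prod.mk_zero_zero]⟩
    refine ⟨((lam k)⁻¹ • w k, mval n ℓ u c k),
      mk_mem_convexHull_liftedVertices c hlu (Nat.lt_succ_iff.mp k.isLt) ⟨fun j _ => ?_, ?_⟩, ?_⟩
    · rw [Pi.smul_apply, smul_eq_mul, Set.mem_Icc, le_inv_mul_iff₀ hkpos, inv_mul_le_iff₀ hkpos,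
        mul_comm _ ℓ, mul_comm _ u]
      exact hw_bound k j
    · show ∑ j, ((lam k)⁻¹ • w k) j = _
      simp only [Pi.smul_apply, smul_eq_mul, ← mul_sum, hw_sum k]
      field_simp
    · simp [smul_smul, hkpos.ne', hv k, mul_comm]
  choose p hp hp_eq using hpiece
  have hxy : (x, y) = ∑ k, lam k • p k := by
    simp only [hp_eq]
    refine Prod.ext (funext fun j => ?_) ?_
    · simpa [Prod.fst_sum] using hx j
    · simpa [Prod.snd_sum] using hy
  rw [hxy]
  exact (convex_convexHull ℝ _).sum_mem (fun k _ => hlam_nonneg k) hlam_sum fun k _ => hp k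

end Hull

theorem stmt2_general (n : ℕ) (ℓ u : ℝ) (hlu : ℓ < u) (c : ℕ → ℝ) :
    convexHull ℝ (Gset n ℓ u c) =
      {p : (Fin n → ℝ) × ℝ |
        ∃ (w : Fin (n + 1) → Fin n → ℝ) (v lam : Fin (n + 1) → ℝ),
          (∀ j, p.1 j = ∑ k, w k j) ∧
          (p.2 = ∑ k, v k) ∧
          (∑ k, lam k = 1) ∧
          (∀ k : Fin (n + 1),
            ∑ j, w k j = (((k : ℕ) : ℝ) * u + ((n - (k : ℕ) : ℕ) : ℝ) * ℓ) * lam k) ∧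
          (∀ k : Fin (n + 1), v k = mval n ℓ u c (k : ℕ) * lam k) ∧
          (∀ (k : Fin (n + 1)) (j : Fin n), ℓ * lam k ≤ w k j ∧ w k j ≤ u * lam k) ∧
          (∀ k, 0 ≤ lam k)} := by
  have hG : convexHull ℝ (Gset n ℓ u c) = convexHull ℝ (liftedVertices n ℓ u c) :=
    (convexHull_min (Gset_subset_convexHull_liftedVertices c hlu) (convex_convexHull ℝ _)).antisymm
      (convexHull_mono (liftedVertices_subset_Gset c hlu.le))
  rw [hG]
  exact (convexHull_min (liftedVertices_subset_disjunctiveHull c hlu.le)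
    (convex_disjunctiveHull n ℓ u c)).antisymm
      (disjunctiveHull_subset_convexHull_liftedVertices c hlu)

/-- `conv(G)` is the projection onto the `(x,y)`-coordinates of the
disjunctive-programming polyhedron in the variables `(x, w⁰,…,wⁿ, y, v, λ)`. -/
theorem stmt2 (n : ℕ) (hn : 2 ≤ n) (ℓ u : ℝ) (hlu : ℓ < u) (c : ℕ → ℝ) :
    convexHull ℝ (Gset n ℓ u c) =
      {p : (Fin n → ℝ) × ℝ |
        ∃ (w : Fin (n + 1) → Fin n → ℝ) (v lam : Fin (n + 1) → ℝ),
          (∀ j, p.1 j = ∑ k, w k j) ∧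
          (p.2 = ∑ k, v k) ∧
          (∑ k, lam k = 1) ∧
          (∀ k : Fin (n + 1),
            ∑ j, w k j = (((k : ℕ) : ℝ) * u + ((n - (k : ℕ) : ℕ) : ℝ) * ℓ) * lam k) ∧
          (∀ k : Fin (n + 1), v k = mval n ℓ u c (k : ℕ) * lam k) ∧
          (∀ (k : Fin (n + 1)) (j : Fin n), ℓ * lam k ≤ w k j ∧ w k j ≤ u * lam k) ∧
          (∀ k, 0 ≤ lam k)} :=
  stmt2_general n ℓ u hlu c
end

section
/- Let β̄₀ + Σ_{j=1}^n β̄_j x_j + β′ y ≥ 0 and β̂₀ + Σ_{j=1}^n β̂_j x_j + β′ y ≥ 0 be two valid core inequalities for conv(G) with the same β′. If L_k(β̄₀,β̄) ≤ L_k(β̂₀,β̂) for all k ∈ {0,…,n}, with strict inequality for at least one k, then the inequality β̂₀ + Σ_{j=1}^n β̂_j x_j + β′ y ≥ 0 is not facet-defining for conv(G). -/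
open Finset

/-!
At a box vertex `x_S` (coordinates `u` on `S`, `ℓ` elsewhere) the left-hand side of an inequality,
taken on the graph of `m`, equals `L_{|S|}(β₀, β) + β′ m(x^{|S|})` (by symmetry of `m`) plus `u - ℓ`
times the excess of `∑_{j ∈ S} β_j` over the sum of the first `|S|` coefficients; for a valid core
inequality both summands are nonnegative. If `β̂` is tight at `x_S`, both vanish, and comparing
`L(β̄) ≤ L(β̂)` on the window of indices where `S` and the initial segment differ forces `β̄` to be
tight at `x_S` as well. Hence `β̄ ≤ C β̂` at every vertex for some `C`, and since both sides are
affine in each coordinate along the graph of `m`, `C β̂ - β̄ ≥ 0` is valid for `conv(G)`: wherever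
`β̂` is tight, so is `β̄`. A facet of `β̂` would then lie in the zero sets of the affine functions
`β̂` and `β̂ - β̄`, which are independent because the second has no `y`-term (when `β̂ = β̄`
coefficientwise, the constants agree instead and no `L_k` differs).
-/
namespace SymmetricMultilinear

open Module
open scoped Pointwise

section OrderedField

variable {𝕜 ι : Type*} [Field 𝕜] [LinearOrder 𝕜] [IsStrictOrderedRing 𝕜]

lemma sum_le_sum_of_card_eq {A B : Finset ι} {f : ι → 𝕜} (hcard : #A = #B)
    (h : ∀ a ∈ A, ∀ b ∈ B, f a ≤ f b) : ∑ a ∈ A, f a ≤ ∑ b ∈ B, f b := by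
  rcases A.eq_empty_or_nonempty with rfl | hA
  · rw [card_empty, eq_comm, card_eq_zero] at hcard
    simp [hcard]
  calc ∑ a ∈ A, f a ≤ #A • A.sup' hA f := sum_le_card_nsmul _ _ _ fun a ha => le_sup' f ha
    _ = #B • A.sup' hA f := by rw [hcard]
    _ ≤ ∑ b ∈ B, f b := card_nsmul_le_sum _ _ _ fun b hb => sup'_le _ _ fun a ha => h a ha b hb

lemma eq_of_sum_le_sum_of_card_eq {A B : Finset ι} {f : ι → 𝕜} (hcard : #A = #B)
    (h : ∀ a ∈ A, ∀ b ∈ B, f a ≤ f b) (hsum : ∑ b ∈ B, f b ≤ ∑ a ∈ A, f a)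
    {a b : ι} (ha : a ∈ A) (hb : b ∈ B) : f a = f b := by
  set m := A.sup' ⟨a, ha⟩ f
  have hA : ∀ x ∈ A, 0 ≤ m - f x := fun x hx => sub_nonneg.2 (le_sup' f hx)
  have hB : ∀ y ∈ B, 0 ≤ f y - m := fun y hy => sub_nonneg.2 (sup'_le _ _ fun x hx => h x hx y hy)
  have hsplit : ∑ x ∈ A, (m - f x) + ∑ y ∈ B, (f y - m) = ∑ y ∈ B, f y - ∑ x ∈ A, f x := by
    simp only [sum_sub_distrib, sum_const, hcard]
    ring
  have hA0 : ∑ x ∈ A, (m - f x) = 0 :=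
    le_antisymm (by linarith [sum_nonneg hB]) (sum_nonneg hA)
  have hB0 : ∑ y ∈ B, (f y - m) = 0 :=
    le_antisymm (by linarith [sum_nonneg hA]) (sum_nonneg hB)
  linarith [(sum_eq_zero_iff_of_nonneg hA).1 hA0 a ha, (sum_eq_zero_iff_of_nonneg hB).1 hB0 b hb]

lemma eq_zero_of_sum_nonpos_of_sum_nonneg {A B : Finset ι} {d : ι → 𝕜}
    (hA : A.Nonempty) (hB : B.Nonempty) (hAB : ∀ a ∈ A, ∀ b ∈ B, d b ≤ d a)
    (hsA : ∑ a ∈ A, d a ≤ 0) (hsB : 0 ≤ ∑ b ∈ B, d b) :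
    (∀ a ∈ A, d a = 0) ∧ ∀ b ∈ B, d b = 0 := by
  have hAnonneg : ∀ a ∈ A, 0 ≤ d a := fun a ha => by
    have hle := sum_le_card_nsmul B d (d a) fun b hb => hAB a ha b hb
    rw [nsmul_eq_mul] at hle
    exact nonneg_of_mul_nonneg_right (hsB.trans hle) (Nat.cast_pos.2 hB.card_pos)
  have hBnonpos : ∀ b ∈ B, d b ≤ 0 := fun b hb => by
    have hle := card_nsmul_le_sum A d (d b) fun a ha => hAB a ha b hb
    rw [nsmul_eq_mul] at hle
    exact nonpos_of_mul_nonpos_right (hle.trans hsA) (Nat.cast_pos.2 hA.card_pos)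
  exact ⟨(sum_eq_zero_iff_of_nonneg hAnonneg).1 (le_antisymm hsA (sum_nonneg hAnonneg)),
    (sum_eq_zero_iff_of_nonpos hBnonpos).1 (le_antisymm (sum_nonpos hBnonpos) hsB)⟩

lemma exists_le_mul_of_eq_zero [Finite ι] (f g : ι → 𝕜) (hg : ∀ i, 0 ≤ g i)
    (hfg : ∀ i, g i = 0 → f i ≤ 0) : ∃ C, ∀ i, f i ≤ C * g i := by
  obtain ⟨C, hC⟩ := Finite.exists_le fun i => f i / g i
  refine ⟨C, fun i => ?_⟩
  rcases (hg i).eq_or_lt with h | h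
  · rw [← h, mul_zero]
    exact hfg i h.symm
  · exact (div_le_iff₀ h).1 (hC i)

end OrderedField

section TwoFunctionals

variable {K V : Type*} [Field K] [AddCommGroup V] [Module K V] [FiniteDimensional K V]
  {f g : V →ₗ[K] K} {v w : V}

lemma finrank_ker_inf_ker_add_two_le (hfv : f v ≠ 0) (hgv : g v = 0) (hgw : g w ≠ 0) :
    finrank K ↥(LinearMap.ker f ⊓ LinearMap.ker g) + 2 ≤ finrank K V := by
  have hf : LinearMap.ker f < ⊤ := SetLike.lt_iff_le_and_exists.2 ⟨le_top, v, trivial, hfv⟩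
  have hfg : LinearMap.ker f ⊓ LinearMap.ker g < LinearMap.ker f := by
    refine SetLike.lt_iff_le_and_exists.2 ⟨inf_le_left, w - (f w / f v) • v, ?_, fun h => hgw ?_⟩
    · simp [LinearMap.mem_ker, hfv]
    · simpa [hgv] using (Submodule.mem_inf.1 h).2
  have h1 := Submodule.finrank_lt_finrank_of_lt hfg
  have h2 := Submodule.finrank_lt_finrank_of_lt hf
  rw [finrank_top] at h2
  omega

lemma add_two_le_finrank_of_affineIndependent {m : ℕ} {p : Fin (m + 1) → V}
    (hp : AffineIndependent K p) {a b : K} (hf : ∀ i, f (p i) = a) (hg : ∀ i, g (p i) = b)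
    (hfv : f v ≠ 0) (hgv : g v = 0) (hgw : g w ≠ 0) : m + 2 ≤ finrank K V := by
  have hspan : vectorSpan K (Set.range p) ≤ LinearMap.ker f ⊓ LinearMap.ker g := by
    rw [vectorSpan_def, Submodule.span_le]
    rintro _ ⟨_, ⟨i, rfl⟩, _, ⟨j, rfl⟩, rfl⟩
    simp [hf, hg]
  have h := Submodule.finrank_mono hspan
  rw [hp.finrank_vectorSpan (Fintype.card_fin _)] at h
  linarith [finrank_ker_inf_ker_add_two_le hfv hgv hgw]

end TwoFunctionals

variable {n : ℕ} {ℓ u : ℝ}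

def boxVertex (n : ℕ) (ℓ u : ℝ) (S : Finset (Fin n)) : Fin n → ℝ :=
  fun j => if j ∈ S then u else ℓ

def initSeg (n k : ℕ) : Finset (Fin n) :=
  Finset.univ.filter fun j : Fin n => (j : ℕ) < k

@[simp]
lemma mem_initSeg {k : ℕ} {j : Fin n} : j ∈ initSeg n k ↔ (j : ℕ) < k := by
  simp [initSeg]

lemma card_initSeg {k : ℕ} (hk : k ≤ n) : #(initSeg n k) = k := by
  rw [initSeg, Fin.card_filter_val_lt, min_eq_right hk]

lemma initSeg_subset_initSeg {a b : ℕ} (hab : a ≤ b) : initSeg n a ⊆ initSeg n b :=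
  fun _ hj => mem_initSeg.2 ((mem_initSeg.1 hj).trans_le hab)

lemma xpt_eq_boxVertex (k : ℕ) : xpt n ℓ u k = boxVertex n ℓ u (initSeg n k) := by
  funext j
  simp [xpt, boxVertex]

lemma boxVertex_mem_Xbox (hlu : ℓ ≤ u) (S : Finset (Fin n)) : boxVertex n ℓ u S ∈ Xbox n ℓ u := by
  intro j
  unfold boxVertex
  split_ifs
  exacts [⟨hlu, le_rfl⟩, ⟨le_rfl, hlu⟩]

lemma boxVertex_mem_Gset (hlu : ℓ ≤ u) (c : ℕ → ℝ) (S : Finset (Fin n)) :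
    (boxVertex n ℓ u S, mPoly n c (boxVertex n ℓ u S)) ∈ Gset n ℓ u c :=
  ⟨boxVertex_mem_Xbox hlu S, rfl⟩

lemma eq_boxVertex_of_forall_eq_or_eq {x : Fin n → ℝ} (hx : ∀ j, x j = ℓ ∨ x j = u) :
    ∃ S, x = boxVertex n ℓ u S := by
  classical
  refine ⟨univ.filter (x · = u), funext fun j => ?_⟩
  by_cases hj : x j = u
  · simp [boxVertex, hj]
  · simpa [boxVertex, hj] using (hx j).resolve_right hj

lemma nonneg_of_nonneg_boxVertex {f : (Fin n → ℝ) → ℝ}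
    (hf : ∀ x j, ∃ A B : ℝ, ∀ s, f (Function.update x j s) = A + s * B)
    (hvert : ∀ S, 0 ≤ f (boxVertex n ℓ u S)) {x : Fin n → ℝ} (hx : x ∈ Xbox n ℓ u) :
    0 ≤ f x := by
  suffices H : ∀ T : Finset (Fin n), ∀ x ∈ Xbox n ℓ u,
      (∀ j ∉ T, x j = ℓ ∨ x j = u) → 0 ≤ f x from
    H univ x hx fun j hj => absurd (mem_univ j) hj
  intro T
  induction T using Finset.induction_on with
  | empty =>
    intro x _ hfree
    obtain ⟨S, rfl⟩ := eq_boxVertex_of_forall_eq_or_eq fun j => hfree j (notMem_empty j)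
    exact hvert S
  | insert j T _ ih =>
    intro x hx hfree
    obtain ⟨A, B, hAB⟩ := hf x j
    have hend : ∀ s, s = ℓ ∨ s = u → 0 ≤ A + s * B := by
      intro s hs
      rw [← hAB]
      refine ih _ (fun i => ?_) fun i hi => ?_
      · rcases eq_or_ne i j with rfl | hij
        · obtain ⟨hℓ, hu⟩ := hx i
          rcases hs with rfl | rfl <;> simp [hℓ.trans hu]
        · simpa [hij] using hx i
      · rcases eq_or_ne i j with rfl | hij
        · simpa using hs
        · simpa [hij] using hfree i (by simp [hij, hi])
    have hxj : f x = A + x j * B := by rw [← hAB, Function.update_eq_self]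
    obtain ⟨hℓ, hu⟩ := hx j
    rcases le_total 0 B with hB | hB
    · nlinarith [hend ℓ (.inl rfl)]
    · nlinarith [hend u (.inr rfl)]

lemma mPoly_comp_perm (c : ℕ → ℝ) (x : Fin n → ℝ) (σ : Equiv.Perm (Fin n)) :
    mPoly n c (x ∘ σ) = mPoly n c x := by
  unfold mPoly
  refine Finset.sum_congr rfl fun i _ => congrArg _ ?_
  refine Finset.sum_equiv σ.finsetCongr (fun J => by simp) fun J _ => ?_
  simp only [Equiv.finsetCongr_apply, Finset.prod_map]
  rfl

lemma mPoly_boxVertex (c : ℕ → ℝ) (S : Finset (Fin n)) :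
    mPoly n c (boxVertex n ℓ u S) = mval n ℓ u c #S := by
  have hcard : #(initSeg n #S) = #S := card_initSeg (by simpa using card_le_univ S)
  obtain ⟨σ, hσ⟩ := (Set.powersetCard.isPretransitive (α := Fin n) (n := #S)).exists_smul_eq
    ⟨S, rfl⟩ ⟨initSeg n #S, hcard⟩
  have hσS : σ • S = initSeg n #S := congrArg Subtype.val hσ
  have hmem : ∀ j, σ j ∈ initSeg n #S ↔ j ∈ S := fun j => by
    rw [← hσS, ← Equiv.Perm.smul_def, Finset.smul_mem_smul_finset_iff]
  have hperm : boxVertex n ℓ u S = boxVertex n ℓ u (initSeg n #S) ∘ σ := by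
    funext j
    simp [boxVertex, hmem]
  rw [hperm, mPoly_comp_perm, mval, xpt_eq_boxVertex]

lemma exists_mPoly_update_eq (c : ℕ → ℝ) (x : Fin n → ℝ) (j : Fin n) :
    ∃ A B : ℝ, ∀ s, mPoly n c (Function.update x j s) = A + s * B := by
  refine ⟨∑ i ∈ Icc 2 n, c i * ∑ J ∈ powersetCard i univ,
      if j ∈ J then 0 else ∏ j' ∈ J, x j',
    ∑ i ∈ Icc 2 n, c i * ∑ J ∈ powersetCard i univ,
      if j ∈ J then ∏ j' ∈ J \ {j}, x j' else 0, fun s => ?_⟩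
  simp only [mPoly, mul_sum, ← sum_add_distrib]
  refine sum_congr rfl fun i _ => sum_congr rfl fun J _ => ?_
  by_cases hj : j ∈ J
  · simp [hj, prod_update_of_mem]
    ring
  · simp [hj, prod_update_of_notMem]

lemma exists_ineqLhs_graph_update_eq (c : ℕ → ℝ) (β₀ : ℝ) (β : Fin n → ℝ) (β' : ℝ)
    (x : Fin n → ℝ) (j : Fin n) :
    ∃ A B : ℝ, ∀ s, ineqLhs n β₀ β β'
      (Function.update x j s, mPoly n c (Function.update x j s)) = A + s * B := by
  obtain ⟨A, B, hAB⟩ := exists_mPoly_update_eq c x j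
  refine ⟨β₀ + ∑ i, β i * Function.update x j 0 i + β' * A, β j + β' * B, fun s => ?_⟩
  have hsum : ∀ t, ∑ i, β i * Function.update x j t i =
      ∑ i, β i * Function.update x j 0 i + β j * t := fun t => by
    simp [Function.update_apply, mul_ite, sum_ite, filter_eq', filter_ne']
    ring
  simp only [ineqLhs, hAB, hsum s]
  ring

def linearPart (β : Fin n → ℝ) (β' : ℝ) : ((Fin n → ℝ) × ℝ) →ₗ[ℝ] ℝ :=
  (∑ j, β j • LinearMap.proj j) ∘ₗ LinearMap.fst ℝ _ ℝ + β' • LinearMap.snd ℝ _ ℝ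

@[simp]
lemma linearPart_apply (β : Fin n → ℝ) (β' : ℝ) (p : (Fin n → ℝ) × ℝ) :
    linearPart β β' p = ∑ j, β j * p.1 j + β' * p.2 := by
  simp [linearPart]

lemma ineqLhs_eq_add_linearPart (β₀ : ℝ) (β : Fin n → ℝ) (β' : ℝ) (p : (Fin n → ℝ) × ℝ) :
    ineqLhs n β₀ β β' p = β₀ + linearPart β β' p := by
  rw [linearPart_apply, ineqLhs, add_assoc]

lemma linearPart_sub_linearPart_apply_ne_zero {β γ : Fin n → ℝ} (h : β ≠ γ) (β' : ℝ) :
    (linearPart β β' - linearPart γ β') (β - γ, 0) ≠ 0 := by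
  obtain ⟨j, hj⟩ := Function.ne_iff.1 h
  simp only [LinearMap.sub_apply, linearPart_apply, ← sum_sub_distrib, mul_zero, add_zero,
    Pi.sub_apply, ← sub_mul]
  exact (sum_pos' (fun x _ => mul_self_nonneg (β x - γ x))
    ⟨j, mem_univ j, mul_self_pos.2 (sub_ne_zero.2 hj)⟩).ne'

lemma ineqLhs_mul_sub (C a₀ b₀ a' b' : ℝ) (a b : Fin n → ℝ) (p : (Fin n → ℝ) × ℝ) :
    ineqLhs n (C * a₀ - b₀) (C • a - b) (C * a' - b') p =
      C * ineqLhs n a₀ a a' p - ineqLhs n b₀ b b' p := by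
  simp only [ineqLhs, Pi.sub_apply, Pi.smul_apply, smul_eq_mul, sub_mul, mul_assoc,
    sum_sub_distrib, ← mul_sum]
  ring

lemma isValid_of_nonneg_boxVertex {c : ℕ → ℝ} {β₀ : ℝ} {β : Fin n → ℝ} {β' : ℝ}
    (hvert : ∀ S, 0 ≤ ineqLhs n β₀ β β' (boxVertex n ℓ u S, mPoly n c (boxVertex n ℓ u S))) :
    IsValid n ℓ u c β₀ β β' := by
  have hhalf : {p | 0 ≤ ineqLhs n β₀ β β' p} = {p | -β₀ ≤ linearPart β β' p} := by
    ext p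
    simp only [Set.mem_ofPred_eq, ineqLhs_eq_add_linearPart, neg_le_iff_add_nonneg']
  have hconv : Convex ℝ {p | 0 ≤ ineqLhs n β₀ β β' p} :=
    hhalf ▸ convex_halfSpace_ge (linearPart β β').isLinear (-β₀)
  refine fun p hp => convexHull_min ?_ hconv hp
  rintro ⟨x, y⟩ ⟨hx, hy : y = mPoly n c x⟩
  subst hy
  exact nonneg_of_nonneg_boxVertex (f := fun x => ineqLhs n β₀ β β' (x, mPoly n c x))
    (exists_ineqLhs_graph_update_eq c β₀ β β') hvert hx

lemma sum_mul_boxVertex (β : Fin n → ℝ) (S : Finset (Fin n)) :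
    ∑ j, β j * boxVertex n ℓ u S j = ℓ * ∑ j, β j + (u - ℓ) * ∑ j ∈ S, β j := by
  rw [← sum_compl_add_sum S β, mul_add, mul_sum, mul_sum, mul_sum,
    ← sum_compl_add_sum S (fun j => β j * boxVertex n ℓ u S j)]
  have hS : ∀ j ∈ S, β j * boxVertex n ℓ u S j = ℓ * β j + (u - ℓ) * β j := fun j hj => by
    simp only [boxVertex, hj, if_true]
    ring
  have hSc : ∀ j ∈ Sᶜ, β j * boxVertex n ℓ u S j = ℓ * β j := fun j hj => by
    simp [boxVertex, mem_compl.1 hj, mul_comm]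
  rw [sum_congr rfl hS, sum_congr rfl hSc, sum_add_distrib]
  ring

lemma Lk_eq_add_sum_initSeg (β₀ : ℝ) (β : Fin n → ℝ) (k : ℕ) :
    Lk n ℓ u β₀ β k = β₀ + ℓ * ∑ j, β j + (u - ℓ) * ∑ j ∈ initSeg n k, β j := by
  have hcompl : univ.filter (fun j : Fin n => k ≤ (j : ℕ)) = (initSeg n k)ᶜ := by
    ext j
    simp
  rw [Lk, hcompl, ← sum_compl_add_sum (initSeg n k) β]
  change β₀ + u * ∑ j ∈ initSeg n k, β j + _ = _
  ring

lemma Lk_sub_Lk (β₀ : ℝ) (β : Fin n → ℝ) {a b : ℕ} (hab : a ≤ b) :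
    Lk n ℓ u β₀ β b - Lk n ℓ u β₀ β a = (u - ℓ) * ∑ j ∈ initSeg n b \ initSeg n a, β j := by
  rw [Lk_eq_add_sum_initSeg, Lk_eq_add_sum_initSeg, sum_sdiff_eq_sub (initSeg_subset_initSeg hab)]
  ring

lemma ineqLhs_boxVertex (c : ℕ → ℝ) (β₀ : ℝ) (β : Fin n → ℝ) (β' : ℝ) (S : Finset (Fin n)) :
    ineqLhs n β₀ β β' (boxVertex n ℓ u S, mPoly n c (boxVertex n ℓ u S)) =
      Lk n ℓ u β₀ β #S + β' * mval n ℓ u c #S +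
        (u - ℓ) * (∑ j ∈ S, β j - ∑ j ∈ initSeg n #S, β j) := by
  rw [ineqLhs, sum_mul_boxVertex, mPoly_boxVertex, Lk_eq_add_sum_initSeg]
  ring

lemma card_initSeg_sdiff (S : Finset (Fin n)) : #(initSeg n #S \ S) = #(S \ initSeg n #S) :=
  card_sdiff_comm (card_initSeg (by simpa using card_le_univ S))

lemma val_lt_card_of_mem_initSeg_sdiff {S : Finset (Fin n)} {a : Fin n}
    (ha : a ∈ initSeg n #S \ S) : (a : ℕ) < #S :=
  mem_initSeg.1 (mem_sdiff.1 ha).1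

lemma card_le_val_of_mem_sdiff_initSeg {S : Finset (Fin n)} {b : Fin n}
    (hb : b ∈ S \ initSeg n #S) : #S ≤ (b : ℕ) :=
  not_lt.1 fun h => (mem_sdiff.1 hb).2 (mem_initSeg.2 h)

lemma sum_initSeg_card_le {β : Fin n → ℝ} (hβ : Monotone β) (S : Finset (Fin n)) :
    ∑ j ∈ initSeg n #S, β j ≤ ∑ j ∈ S, β j := by
  rw [← sub_nonneg, ← sum_sdiff_sub_sum_sdiff, sub_nonneg]
  refine sum_le_sum_of_card_eq (card_initSeg_sdiff S) fun a ha b hb => hβ ?_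
  exact Fin.le_def.2 ((val_lt_card_of_mem_initSeg_sdiff ha).trans_le
    (card_le_val_of_mem_sdiff_initSeg hb)).le

section TwoInequalities

variable {c : ℕ → ℝ} {βb₀ βh₀ β' : ℝ} {βb βh : Fin n → ℝ}

lemma eq_on_window_of_Lk_eq (hlu : ℓ < u) (hmb : Monotone βb) (hmh : Monotone βh)
    (hle : ∀ k ≤ n, Lk n ℓ u βb₀ βb k ≤ Lk n ℓ u βh₀ βh k) {p q : Fin n} {k : ℕ}
    (hpk : (p : ℕ) < k) (hkq : k ≤ q) (hk : Lk n ℓ u βh₀ βh k = Lk n ℓ u βb₀ βb k)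
    (hpq : βh p = βh q) {i : Fin n} (hpi : p ≤ i) (hiq : i ≤ q) : βb i = βh i := by
  set d : Fin n → ℝ := fun j => βh j - βb j
  -- `(u - ℓ) d` telescopes to `L(β̂) - L(β̄)`, which is nonnegative and vanishes at `k`.
  have hδ : ∀ a b, a ≤ b → (u - ℓ) * ∑ j ∈ initSeg n b \ initSeg n a, d j =
      (Lk n ℓ u βh₀ βh b - Lk n ℓ u βb₀ βb b) - (Lk n ℓ u βh₀ βh a - Lk n ℓ u βb₀ βb a) := by
    intro a b hab
    rw [sum_sub_distrib, mul_sub, ← Lk_sub_Lk βh₀ βh hab, ← Lk_sub_Lk βb₀ βb hab]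
    ring
  have hmemA {j : Fin n} : j ∈ initSeg n k \ initSeg n p ↔ p ≤ j ∧ (j : ℕ) < k := by
    simp only [mem_sdiff, mem_initSeg, not_lt, Fin.le_def, and_comm]
  have hmemB {j : Fin n} : j ∈ initSeg n (q + 1) \ initSeg n k ↔ k ≤ j ∧ j ≤ q := by
    simp only [mem_sdiff, mem_initSeg, not_lt, Fin.le_def, Nat.lt_succ_iff, and_comm]
  have hwindow : ∀ j, p ≤ j → j ≤ q → βh j = βh p := fun j hpj hjq =>
    le_antisymm (hpq ▸ hmh hjq) (hmh hpj)
  have hAB : ∀ a ∈ initSeg n k \ initSeg n p, ∀ b ∈ initSeg n (q + 1) \ initSeg n k,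
      d b ≤ d a := by
    intro a ha b hb
    obtain ⟨hpa, hak⟩ := hmemA.1 ha
    obtain ⟨hkb, hbq⟩ := hmemB.1 hb
    have hab : a ≤ b := Fin.le_def.2 (hak.le.trans hkb)
    simp only [d, hwindow a hpa (hab.trans hbq), hwindow b (hpa.trans hab) hbq]
    linarith [hmb hab]
  have hsA : ∑ j ∈ initSeg n k \ initSeg n p, d j ≤ 0 := nonpos_of_mul_nonpos_right
    (by rw [hδ _ _ hpk.le, hk]; linarith [hle p (p.2.le)]) (sub_pos.2 hlu)
  have hsB : 0 ≤ ∑ j ∈ initSeg n (q + 1) \ initSeg n k, d j := nonneg_of_mul_nonneg_right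
    (by rw [hδ _ _ (Nat.le_succ_of_le hkq), hk]; linarith [hle (q + 1) q.2]) (sub_pos.2 hlu)
  obtain ⟨hA0, hB0⟩ := eq_zero_of_sum_nonpos_of_sum_nonneg ⟨p, hmemA.2 ⟨le_rfl, hpk⟩⟩
    ⟨q, hmemB.2 ⟨hkq, le_rfl⟩⟩ hAB hsA hsB
  rcases lt_or_ge (i : ℕ) k with hik | hki
  · linarith [hA0 i (hmemA.2 ⟨hpi, hik⟩)]
  · linarith [hB0 i (hmemB.2 ⟨hki, hiq⟩)]

lemma sum_eq_sum_initSeg_of_tight (hlu : ℓ < u) (hmb : Monotone βb) (hmh : Monotone βh)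
    (hle : ∀ k ≤ n, Lk n ℓ u βb₀ βb k ≤ Lk n ℓ u βh₀ βh k) {S : Finset (Fin n)}
    (hSh : ∑ j ∈ S, βh j = ∑ j ∈ initSeg n #S, βh j)
    (hSk : Lk n ℓ u βh₀ βh #S = Lk n ℓ u βb₀ βb #S) :
    ∑ j ∈ S, βb j = ∑ j ∈ initSeg n #S, βb j := by
  rw [← sub_eq_zero, ← sum_sdiff_sub_sum_sdiff] at hSh ⊢
  rcases (initSeg n #S \ S).eq_empty_or_nonempty with hempty | hne
  · have hempty' : S \ initSeg n #S = ∅ :=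
      card_eq_zero.1 (by rw [← card_initSeg_sdiff, hempty, card_empty])
    simp [hempty, hempty']
  have hne' : (S \ initSeg n #S).Nonempty := card_pos.1 (card_initSeg_sdiff S ▸ hne.card_pos)
  set p := (initSeg n #S \ S).min' hne
  set q := (S \ initSeg n #S).max' hne'
  have hpS : (p : ℕ) < #S := val_lt_card_of_mem_initSeg_sdiff (min'_mem _ hne)
  have hSq : #S ≤ (q : ℕ) := card_le_val_of_mem_sdiff_initSeg (max'_mem _ hne')
  have hpq : βh p = βh q := eq_of_sum_le_sum_of_card_eq (card_initSeg_sdiff S)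
    (fun a ha b hb => hmh (Fin.le_def.2 ((val_lt_card_of_mem_initSeg_sdiff ha).trans_le
      (card_le_val_of_mem_sdiff_initSeg hb)).le)) (by linarith) (min'_mem _ hne) (max'_mem _ hne')
  have heq {i : Fin n} (hpi : p ≤ i) (hiq : i ≤ q) : βb i = βh i :=
    eq_on_window_of_Lk_eq hlu hmb hmh hle hpS hSq hSk hpq hpi hiq
  have hright : ∑ j ∈ S \ initSeg n #S, βb j = ∑ j ∈ S \ initSeg n #S, βh j :=
    sum_congr rfl fun j hj =>
      heq (Fin.le_def.2 (hpS.trans_le (card_le_val_of_mem_sdiff_initSeg hj)).le) (le_max' _ j hj)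
  have hleft : ∑ j ∈ initSeg n #S \ S, βb j = ∑ j ∈ initSeg n #S \ S, βh j :=
    sum_congr rfl fun j hj =>
      heq (min'_le _ j hj) (Fin.le_def.2 ((val_lt_card_of_mem_initSeg_sdiff hj).trans_le hSq).le)
  rwa [hright, hleft]

lemma ineqLhs_boxVertex_eq_zero_of_tight (hlu : ℓ < u) (hmb : Monotone βb) (hmh : Monotone βh)
    (hvb : IsValid n ℓ u c βb₀ βb β') (hvh : IsValid n ℓ u c βh₀ βh β')
    (hle : ∀ k ≤ n, Lk n ℓ u βb₀ βb k ≤ Lk n ℓ u βh₀ βh k) {S : Finset (Fin n)}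
    (hH : ineqLhs n βh₀ βh β' (boxVertex n ℓ u S, mPoly n c (boxVertex n ℓ u S)) = 0) :
    ineqLhs n βb₀ βb β' (boxVertex n ℓ u S, mPoly n c (boxVertex n ℓ u S)) = 0 := by
  have hS : #S ≤ n := by simpa using card_le_univ S
  have hLk_nonneg {β₀ : ℝ} {β : Fin n → ℝ} (hv : IsValid n ℓ u c β₀ β β') :
      0 ≤ Lk n ℓ u β₀ β #S + β' * mval n ℓ u c #S := by
    have h := hv _ (subset_convexHull ℝ _ (boxVertex_mem_Gset hlu.le c (initSeg n #S)))
    rwa [ineqLhs_boxVertex, card_initSeg hS, sub_self, mul_zero, add_zero] at h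
  have hexcess : 0 ≤ (u - ℓ) * (∑ j ∈ S, βh j - ∑ j ∈ initSeg n #S, βh j) :=
    mul_nonneg (sub_pos.2 hlu).le (sub_nonneg.2 (sum_initSeg_card_le hmh S))
  rw [ineqLhs_boxVertex] at hH ⊢
  have hexcess0 : ∑ j ∈ S, βh j = ∑ j ∈ initSeg n #S, βh j := by
    have h : (u - ℓ) * (∑ j ∈ S, βh j - ∑ j ∈ initSeg n #S, βh j) = 0 := by
      linarith [hLk_nonneg hvh]
    exact sub_eq_zero.1 ((mul_eq_zero.1 h).resolve_left (sub_pos.2 hlu).ne')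
  rw [hexcess0, sub_self, mul_zero, add_zero] at hH
  have hk : Lk n ℓ u βh₀ βh #S = Lk n ℓ u βb₀ βb #S := by
    linarith [hLk_nonneg hvb, hle #S hS]
  rw [sum_eq_sum_initSeg_of_tight hlu hmb hmh hle hexcess0 hk, sub_self, mul_zero, add_zero,
    ← hk, hH]

lemma ineqLhs_eq_zero_of_ineqLhs_eq_zero (hlu : ℓ < u) (hmb : Monotone βb) (hmh : Monotone βh)
    (hvb : IsValid n ℓ u c βb₀ βb β') (hvh : IsValid n ℓ u c βh₀ βh β')
    (hle : ∀ k ≤ n, Lk n ℓ u βb₀ βb k ≤ Lk n ℓ u βh₀ βh k) {p : (Fin n → ℝ) × ℝ}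
    (hp : p ∈ convexHull ℝ (Gset n ℓ u c)) (hH : ineqLhs n βh₀ βh β' p = 0) :
    ineqLhs n βb₀ βb β' p = 0 := by
  have hvertex {β₀ : ℝ} {β : Fin n → ℝ} (hv : IsValid n ℓ u c β₀ β β') (S : Finset (Fin n)) :
      0 ≤ ineqLhs n β₀ β β' (boxVertex n ℓ u S, mPoly n c (boxVertex n ℓ u S)) :=
    hv _ (subset_convexHull ℝ _ (boxVertex_mem_Gset hlu.le c S))
  obtain ⟨C, hC⟩ := exists_le_mul_of_eq_zero
    (fun S => ineqLhs n βb₀ βb β' (boxVertex n ℓ u S, mPoly n c (boxVertex n ℓ u S)))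
    (fun S => ineqLhs n βh₀ βh β' (boxVertex n ℓ u S, mPoly n c (boxVertex n ℓ u S)))
    (hvertex hvh) fun S hS => (ineqLhs_boxVertex_eq_zero_of_tight hlu hmb hmh hvb hvh hle hS).le
  have hvalid : IsValid n ℓ u c (C * βh₀ - βb₀) (C • βh - βb) (C * β' - β') :=
    isValid_of_nonneg_boxVertex fun S => by
      rw [ineqLhs_mul_sub]
      linarith [hC S]
  have h := hvalid p hp
  rw [ineqLhs_mul_sub, hH] at h
  linarith [hvb p hp]

end TwoInequalities

end SymmetricMultilinear

open SymmetricMultilinear Module in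
theorem stmt6_general (n : ℕ) (ℓ u : ℝ) (hlu : ℓ < u) (c : ℕ → ℝ)
    (βb₀ : ℝ) (βb : Fin n → ℝ) (βh₀ : ℝ) (βh : Fin n → ℝ) (β' : ℝ)
    (hcoreb : IsCore n βb β') (hvalidb : IsValid n ℓ u c βb₀ βb β')
    (hcoreh : IsCore n βh β') (hvalidh : IsValid n ℓ u c βh₀ βh β')
    (hle : ∀ k ≤ n, Lk n ℓ u βb₀ βb k ≤ Lk n ℓ u βh₀ βh k)
    (hlt : ∃ k ≤ n, Lk n ℓ u βb₀ βb k < Lk n ℓ u βh₀ βh k) :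
    ¬ IsFacet n ℓ u c βh₀ βh β' := by
  rintro ⟨pts, hindep, hpts⟩
  have hH (i) : ineqLhs n βh₀ βh β' (pts i) = 0 := (hpts i).2
  have hB (i) : ineqLhs n βb₀ βb β' (pts i) = 0 := ineqLhs_eq_zero_of_ineqLhs_eq_zero hlu
    hcoreb.2 hcoreh.2 hvalidb hvalidh hle (hpts i).1 (hH i)
  set g := linearPart βh β' - linearPart βb β'
  have hf (i) : linearPart βh β' (pts i) = -βh₀ := by
    linarith [hH i, ineqLhs_eq_add_linearPart βh₀ βh β' (pts i)]
  have hg (i) : g (pts i) = βb₀ - βh₀ := by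
    simp only [g, LinearMap.sub_apply, hf]
    linarith [hB i, ineqLhs_eq_add_linearPart βb₀ βb β' (pts i)]
  by_cases hβ : βh = βb
  · obtain ⟨k, -, hk⟩ := hlt
    have h0 := hg 0
    simp only [g, hβ, sub_self, LinearMap.zero_apply] at h0
    rw [hβ, sub_eq_zero.1 h0.symm] at hk
    exact lt_irrefl _ hk
  · have hβ' : β' ≠ 0 := by rcases hcoreh.1 with h | h <;> simp [h]
    have h := add_two_le_finrank_of_affineIndependent hindep hf hg (v := (0, 1))
      (by simpa using hβ') (by simp [g]) (linearPart_sub_linearPart_apply_ne_zero hβ β')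
    simp [finrank_prod] at h

/-- Given two valid core inequalities with the same `β′`, if
`L_k(β̄₀,β̄) ≤ L_k(β̂₀,β̂)` for all `k ∈ {0,…,n}` with strict inequality for some `k`,
then the second inequality is not facet-defining. -/
theorem stmt6 (n : ℕ) (hn : 2 ≤ n) (ℓ u : ℝ) (hlu : ℓ < u) (c : ℕ → ℝ)
    (βb₀ : ℝ) (βb : Fin n → ℝ) (βh₀ : ℝ) (βh : Fin n → ℝ) (β' : ℝ)
    (hcoreb : IsCore n βb β') (hvalidb : IsValid n ℓ u c βb₀ βb β')
    (hcoreh : IsCore n βh β') (hvalidh : IsValid n ℓ u c βh₀ βh β')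
    (hle : ∀ k ≤ n, Lk n ℓ u βb₀ βb k ≤ Lk n ℓ u βh₀ βh k)
    (hlt : ∃ k ≤ n, Lk n ℓ u βb₀ βb k < Lk n ℓ u βh₀ βh k) :
    ¬ IsFacet n ℓ u c βh₀ βh β' :=
  stmt6_general n ℓ u hlu c βb₀ βb βh₀ βh β' hcoreb hvalidb hcoreh hvalidh hle hlt
end
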